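/- arXiv:2107.06609 — 2 statements merged into one kernel-verified Lean document; each statement's English description precedes it below -/
import Mathlib

section
/- Let φ = (𝔨_1 ⊊ ⋯ ⊊ 𝔨_r) be a flag and let A ∈ B[φ]. Then either A ∈ D(𝔨_r), or ker A = 𝔨_i for some 1 ≤ i ≤ r − 1. -/
open scoped RealInnerProductSpace Classical
open Module Set Filter

/-- A Lie bracket on a real inner product space for which every adjoint map
`ad X : y ↦ ⁅X, y⁆` is skew-adjoint with respect to the inner product; this is the
Lie-algebraic model of a compact Lie group with a biinvariant metric. -/
structure CompactLieBracket (L : Type*) [NormedAddCommGroup L] [InnerProductSpace ℝ L] where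
  br : L →ₗ[ℝ] L →ₗ[ℝ] L
  br_self : ∀ x : L, br x x = 0
  jacobi : ∀ x y z : L, br x (br y z) + br y (br z x) + br z (br x y) = 0
  skew : ∀ x y z : L, ⟪br x y, z⟫ = ⟪x, br y z⟫

variable {L : Type*} [NormedAddCommGroup L] [InnerProductSpace ℝ L] [FiniteDimensional ℝ L]
variable (𝔩 : CompactLieBracket L) (H : Submodule ℝ L)

/-- `K` is a Lie subalgebra of `(L, 𝔩.br)`. -/
def IsLieSub (K : Submodule ℝ L) : Prop := ∀ x ∈ K, ∀ y ∈ K, 𝔩.br x y ∈ K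

/-- The disk `D(𝔨)`, with the convention `D(𝔤) = ∅`. -/
noncomputable def disk (K : Submodule ℝ L) : Set (L →L[ℝ] L) :=
  if K = ⊤ then ∅ else
    { A | (∀ x y : L, ⟪A x, y⟫ = ⟪x, A y⟫) ∧
          (∀ Z ∈ H, ∀ y : L, A (𝔩.br Z y) = 𝔩.br Z (A y)) ∧
          (∀ x : L, 0 ≤ ⟪A x, x⟫) ∧
          (∀ x ∈ K, A x = 0) ∧
          LinearMap.trace ℝ L (A : L →ₗ[ℝ] L) = 1 ∧
          (∀ X ∈ K, ∀ y : L, A (𝔩.br X y) = 𝔩.br X (A y)) }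

/-- The orthogonal projection of `L` onto `K`, as an endomorphism of `L`. -/
noncomputable def projL (K : Submodule ℝ L) : L →L[ℝ] L :=
  K.subtypeL.comp K.orthogonalProjectionOnto

/-- The endomorphism `A^𝔨 = (dim 𝔤 - dim 𝔨)⁻¹ • (id - π_𝔨)`. -/
noncomputable def Apt (K : Submodule ℝ L) : L →L[ℝ] L :=
  ((finrank ℝ L : ℝ) - (finrank ℝ ↥K : ℝ))⁻¹ • (ContinuousLinearMap.id ℝ L - projL K)

/-- The join `X ∗ Y` of two subsets, with the convention `X ∗ ∅ = X`. -/
noncomputable def join (X Y : Set (L →L[ℝ] L)) : Set (L →L[ℝ] L) :=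
  if Y = ∅ then X
  else { z | ∃ x ∈ X, ∃ y ∈ Y, ∃ t : ℝ, t ∈ Icc (0 : ℝ) 1 ∧ z = (1 - t) • x + t • y }

/-- A flag: a nonempty chain of subalgebras, each strictly containing `𝔥`. -/
def IsFlag (s : Finset (Submodule ℝ L)) : Prop :=
  s.Nonempty ∧ IsChain (· ≤ ·) (s : Set (Submodule ℝ L)) ∧ ∀ K ∈ s, IsLieSub 𝔩 K ∧ H < K

/-- The maximum `max φ` of a flag. -/
noncomputable def flagMax (s : Finset (Submodule ℝ L)) : Submodule ℝ L :=
  sSup (s : Set (Submodule ℝ L))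

/-- The butterfly `B[φ]` of a flag `φ`. -/
noncomputable def butterfly (s : Finset (Submodule ℝ L)) : Set (L →L[ℝ] L) :=
  if s.card = 1 then disk 𝔩 H (flagMax s)
  else join (convexHull ℝ (Apt '' (↑(s.erase (flagMax s)) : Set (Submodule ℝ L))))
      (disk 𝔩 H (flagMax s))

/-! A positive semidefinite operator vanishes exactly where its quadratic form does, so the
kernel of a sum of such operators is the intersection of their kernels; moreover
`ker A^𝔨 = 𝔨`. A convex combination of the `A^{𝔨_i}` therefore has as kernel the intersection
of the `𝔨_i` carrying positive weight, which is the smallest of them because the flag is a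
chain. Joining with `y ∈ D(𝔨_r)` at a parameter `t < 1` keeps this kernel, since it lies in
`𝔨_r ⊆ ker y`; at `t = 1` the point is `y` itself. -/

namespace LinearMap

variable {E : Type*} [NormedAddCommGroup E] [InnerProductSpace ℝ E]

theorem IsPositive.apply_eq_zero_of_inner_self_eq_zero {T : E →ₗ[ℝ] E} (hT : T.IsPositive)
    {v : E} (hv : ⟪T v, v⟫ = 0) : T v = 0 := by
  -- `s ↦ ⟪T (s • T v + v), s • T v + v⟫` is a nonnegative quadratic without constant term
  have hquad : ∀ s : ℝ, 0 ≤ ⟪T (T v), T v⟫ * (s * s) + 2 * ⟪T v, T v⟫ * s + 0 := by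
    intro s
    have h := hT.inner_nonneg_left (s • T v + v)
    rw [map_add, map_smul, inner_add_left, inner_add_right, inner_add_right, inner_smul_left,
      inner_smul_right, inner_smul_left, inner_smul_right, hv, hT.isSymmetric (T v) v] at h
    simp only [conj_trivial] at h
    linarith
  have hdisc := discrim_le_zero hquad
  rw [discrim] at hdisc
  have : ⟪T v, T v⟫ = 0 := by nlinarith
  exact inner_self_eq_zero.mp this

theorem IsPositive.ker_add {S T : E →ₗ[ℝ] E} (hS : S.IsPositive) (hT : T.IsPositive) :
    ker (S + T) = ker S ⊓ ker T := by
  refine le_antisymm (fun v hv => ?_) (fun v ⟨hSv, hTv⟩ => by simp_all)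
  have hsum : ⟪S v, v⟫ + ⟪T v, v⟫ = 0 := by
    rw [← inner_add_left, ← add_apply, mem_ker.mp hv, inner_zero_left]
  have hSv := hS.inner_nonneg_left v
  have hTv := hT.inner_nonneg_left v
  exact ⟨hS.apply_eq_zero_of_inner_self_eq_zero (by linarith),
    hT.apply_eq_zero_of_inner_self_eq_zero (by linarith)⟩

theorem IsPositive.ker_add_of_ker_le {S T : E →ₗ[ℝ] E} (hS : S.IsPositive) (hT : T.IsPositive)
    (hST : ker S ≤ ker T) : ker (S + T) = ker S := by
  rw [hS.ker_add hT, inf_eq_left.mpr hST]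

theorem ker_sum_of_isPositive {ι : Type*} (t : Finset ι) {T : ι → E →ₗ[ℝ] E}
    (hT : ∀ i ∈ t, (T i).IsPositive) : ker (∑ i ∈ t, T i) = t.inf fun i => ker (T i) := by
  induction t using Finset.cons_induction with
  | empty => simp
  | cons a t _ ih =>
    rw [Finset.forall_mem_cons] at hT
    rw [Finset.sum_cons, hT.1.ker_add (isPositive_sum t hT.2), ih hT.2, Finset.inf_cons]

end LinearMap

theorem IsChain.inf_mem {α : Type*} [SemilatticeInf α] {s : Set α} (hs : IsChain (· ≤ ·) s)
    {x y : α} (hx : x ∈ s) (hy : y ∈ s) : x ⊓ y ∈ s := by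
  rcases hs.total hx hy with h | h
  · rwa [inf_eq_left.mpr h]
  · rwa [inf_eq_right.mpr h]

namespace ContinuousLinearMap

variable {E : Type*} [NormedAddCommGroup E] [InnerProductSpace ℝ E]

theorem convex_setOf_isPositive : Convex ℝ {T : E →L[ℝ] E | T.IsPositive} :=
  fun _ hS _ hT _ _ ha hb _ => (hS.smul_of_nonneg ha).add (hT.smul_of_nonneg hb)

theorem ker_mem_image_ker_of_mem_convexHull {S : Set (E →L[ℝ] E)}
    (hS : ∀ T ∈ S, T.IsPositive)
    (hchain : IsChain (· ≤ ·) ((fun T : E →L[ℝ] E => LinearMap.ker (T : E →ₗ[ℝ] E)) '' S))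
    {x : E →L[ℝ] E} (hx : x ∈ convexHull ℝ S) :
    LinearMap.ker (x : E →ₗ[ℝ] E) ∈ (fun T : E →L[ℝ] E => LinearMap.ker (T : E →ₗ[ℝ] E)) '' S := by
  classical
  rw [convexHull_eq] at hx
  obtain ⟨ι, t, w, z, hw, hw1, hz, rfl⟩ := hx
  set t' := t.filter fun i => w i ≠ 0
  have hsupp : ∑ i ∈ t', w i • z i = ∑ i ∈ t, w i • z i :=
    Finset.sum_filter_of_ne fun i _ h hw0 => h (by rw [hw0, zero_smul])
  have ht' : t'.Nonempty :=
    Finset.nonempty_of_sum_ne_zero (by rw [Finset.sum_filter_ne_zero, hw1]; exact one_ne_zero)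
  have hker : LinearMap.ker ((∑ i ∈ t', w i • z i : E →L[ℝ] E) : E →ₗ[ℝ] E)
      = t'.inf' ht' fun i => LinearMap.ker (z i : E →ₗ[ℝ] E) := by
    have hpos : ∀ i ∈ t', ((w i • z i : E →L[ℝ] E) : E →ₗ[ℝ] E).IsPositive := fun i hi =>
      ((hS _ (hz i (Finset.mem_filter.mp hi).1)).smul_of_nonneg
        (hw i (Finset.mem_filter.mp hi).1)).toLinearMap
    rw [toLinearMap_sum, LinearMap.ker_sum_of_isPositive t' hpos, Finset.inf'_eq_inf]
    refine Finset.inf_congr rfl fun i hi => ?_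
    rw [toLinearMap_smul, LinearMap.ker_smul _ _ (Finset.mem_filter.mp hi).2]
  rw [Finset.centerMass_eq_of_sum_1 _ _ hw1, ← hsupp, hker]
  exact Finset.inf'_mem _ (fun _ hK _ hK' => hchain.inf_mem hK hK') t' ht' _
    fun i hi => Set.mem_image_of_mem _ (hz i (Finset.mem_filter.mp hi).1)

theorem IsPositive.ker_one_sub_smul_add_smul {x y : E →L[ℝ] E} (hx : x.IsPositive)
    (hy : y.IsPositive) (hxy : LinearMap.ker (x : E →ₗ[ℝ] E) ≤ LinearMap.ker (y : E →ₗ[ℝ] E))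
    {t : ℝ} (ht0 : 0 ≤ t) (ht1 : t < 1) :
    LinearMap.ker (((1 - t) • x + t • y : E →L[ℝ] E) : E →ₗ[ℝ] E)
      = LinearMap.ker (x : E →ₗ[ℝ] E) := by
  have hkerx : LinearMap.ker (((1 - t) • x : E →L[ℝ] E) : E →ₗ[ℝ] E)
      = LinearMap.ker (x : E →ₗ[ℝ] E) := by
    rw [toLinearMap_smul, LinearMap.ker_smul _ _ (sub_ne_zero.mpr ht1.ne')]
  have hle : LinearMap.ker (((1 - t) • x : E →L[ℝ] E) : E →ₗ[ℝ] E)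
      ≤ LinearMap.ker ((t • y : E →L[ℝ] E) : E →ₗ[ℝ] E) := by
    rw [hkerx, toLinearMap_smul]
    exact hxy.trans (LinearMap.ker_le_ker_smul _ _)
  rw [toLinearMap_add, (hx.smul_of_nonneg (sub_nonneg.mpr ht1.le)).toLinearMap.ker_add_of_ker_le
    (hy.smul_of_nonneg ht0).toLinearMap hle, hkerx]

end ContinuousLinearMap

theorem apt_eq_smul_starProjection (K : Submodule ℝ L) :
    Apt K = ((finrank ℝ L : ℝ) - (finrank ℝ K : ℝ))⁻¹ • Kᗮ.starProjection := by
  rw [Apt, Submodule.starProjection_orthogonal]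
  rfl

theorem isPositive_apt (K : Submodule ℝ L) : (Apt K).IsPositive := by
  rw [apt_eq_smul_starProjection]
  refine (ContinuousLinearMap.IsPositive.of_isStarProjection
    isStarProjection_starProjection).smul_of_nonneg (inv_nonneg.mpr (sub_nonneg.mpr ?_))
  exact_mod_cast Submodule.finrank_le K

theorem ker_apt {K : Submodule ℝ L} (hK : K ≠ ⊤) : LinearMap.ker (Apt K : L →ₗ[ℝ] L) = K := by
  have hdim : (finrank ℝ K : ℝ) < finrank ℝ L := by exact_mod_cast Submodule.finrank_lt hK
  rw [apt_eq_smul_starProjection, ContinuousLinearMap.toLinearMap_smul,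
    LinearMap.ker_smul _ _ (inv_ne_zero (sub_ne_zero.mpr hdim.ne')),
    Submodule.ker_starProjection, Submodule.orthogonal_orthogonal]

theorem isPositive_and_ker_mem_of_mem_convexHull_apt {C : Set (Submodule ℝ L)}
    (hC : IsChain (· ≤ ·) C) (htop : ⊤ ∉ C) {x : L →L[ℝ] L}
    (hx : x ∈ convexHull ℝ (Apt '' C)) :
    x.IsPositive ∧ LinearMap.ker (x : L →ₗ[ℝ] L) ∈ C := by
  have hkerC : (fun T : L →L[ℝ] L => LinearMap.ker (T : L →ₗ[ℝ] L)) '' (Apt '' C) = C := by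
    rw [Set.image_image, Set.image_congr fun K hK => ker_apt (ne_of_mem_of_not_mem hK htop),
      Set.image_id']
  have hpos : ∀ T ∈ Apt '' C, T.IsPositive := by
    rintro _ ⟨K, -, rfl⟩
    exact isPositive_apt K
  refine ⟨convexHull_min hpos ContinuousLinearMap.convex_setOf_isPositive hx, ?_⟩
  rw [← hkerC] at hC ⊢
  exact ContinuousLinearMap.ker_mem_image_ker_of_mem_convexHull hpos hC hx

section

variable {𝔩 H}

omit [FiniteDimensional ℝ L] in
theorem isPositive_and_le_ker_of_mem_disk {K : Submodule ℝ L} {y : L →L[ℝ] L}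
    (hy : y ∈ disk 𝔩 H K) : y.IsPositive ∧ K ≤ LinearMap.ker (y : L →ₗ[ℝ] L) := by
  rw [disk] at hy
  split_ifs at hy
  · exact absurd hy (Set.notMem_empty y)
  obtain ⟨hsymm, -, hnonneg, hK, -⟩ := hy
  exact ⟨(ContinuousLinearMap.isPositive_iff y).mpr ⟨hsymm, hnonneg⟩, hK⟩

end

theorem butterfly_mem_kernel
    (s : Finset (Submodule ℝ L)) (hs : IsFlag 𝔩 H s)
    (A : L →L[ℝ] L) (hA : A ∈ butterfly 𝔩 H s) :
    A ∈ disk 𝔩 H (flagMax s) ∨ ∃ K ∈ s, K ≠ flagMax s ∧ LinearMap.ker (A : L →ₗ[ℝ] L) = K := by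
  set M := flagMax s
  have hchain : IsChain (· ≤ ·) (↑(s.erase M) : Set (Submodule ℝ L)) :=
    hs.2.1.mono (Finset.coe_subset.mpr (Finset.erase_subset M s))
  have htop : ⊤ ∉ (↑(s.erase M) : Set (Submodule ℝ L)) := fun hmem =>
    Finset.ne_of_mem_erase hmem (top_le_iff.mp (le_sSup (Finset.mem_of_mem_erase hmem))).symm
  have hhull : ∀ x : L →L[ℝ] L, x ∈ convexHull ℝ (Apt '' ↑(s.erase M)) →
      x.IsPositive ∧ LinearMap.ker (x : L →ₗ[ℝ] L) ∈ s.erase M :=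
    fun _ hx => isPositive_and_ker_mem_of_mem_convexHull_apt hchain htop hx
  have hright : LinearMap.ker (A : L →ₗ[ℝ] L) ∈ s.erase M →
      ∃ K ∈ s, K ≠ M ∧ LinearMap.ker (A : L →ₗ[ℝ] L) = K := fun hK =>
    ⟨_, Finset.mem_of_mem_erase hK, Finset.ne_of_mem_erase hK, rfl⟩
  rw [butterfly] at hA
  split_ifs at hA
  · exact Or.inl hA
  rw [_root_.join] at hA
  split_ifs at hA
  · exact Or.inr (hright (hhull A hA).2)
  obtain ⟨x, hx, y, hy, t, ⟨ht0, ht1⟩, rfl⟩ := hA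
  rcases ht1.eq_or_lt with rfl | ht1
  · exact Or.inl (by simpa using hy)
  obtain ⟨hxpos, hxker⟩ := hhull x hx
  obtain ⟨hypos, hyker⟩ := isPositive_and_le_ker_of_mem_disk hy
  have hxy : LinearMap.ker (x : L →ₗ[ℝ] L) ≤ LinearMap.ker (y : L →ₗ[ℝ] L) :=
    (le_sSup (Finset.mem_of_mem_erase hxker)).trans hyker
  refine Or.inr (hright ?_)
  rwa [hxpos.ker_one_sub_smul_add_smul hypos hxy ht0 ht1]
end

section
/- Let φ, ψ be flags with φ < ψ. Then B[ψ] ⊆ B[φ]; if moreover ψ is a proper flag, then B[ψ] ⊊ B[φ]. -/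
open scoped RealInnerProductSpace Classical
open Module Set Filter

variable {L : Type*} [NormedAddCommGroup L] [InnerProductSpace ℝ L] [FiniteDimensional ℝ L]
variable (𝔩 : CompactLieBracket L) (H : Submodule ℝ L)

/-- An elementary move between flags: either adjoin a new maximum, or delete a
non-maximal member. -/
def FlagStep (s t : Finset (Submodule ℝ L)) : Prop :=
  IsFlag 𝔩 H s ∧ IsFlag 𝔩 H t ∧
    ((∃ K : Submodule ℝ L, flagMax s < K ∧ t = insert K s) ∨
      (∃ K ∈ s, K ≠ flagMax s ∧ t = s.erase K))

/-- The partial order `φ ≤ ψ` on flags: equality or a finite chain of elementary moves. -/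
def FlagLE (s t : Finset (Submodule ℝ L)) : Prop :=
  Relation.ReflTransGen (FlagStep 𝔩 H) s t

/-! Every butterfly is convex and contains `D(max φ)` and the points `A^𝔨` of the non-maximal
members `𝔨` of `φ` (and `A^{max φ}` when `max φ ≠ 𝔤`); with `D` antitone this gives `B[ψ] ⊆ B[φ]`
for a single move `φ → ψ`, hence for `φ ≤ ψ`.

Strictness is witnessed by linear functionals of the form `B ↦ ⟪B v, v⟫`. If a new maximum
`𝔨 ≠ 𝔤` is adjoined above `𝔪 = max φ`, a unit vector `v ∈ 𝔨 ⊖ 𝔪` gives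
`⟪B v, v⟫ ≤ (dim 𝔤 - dim 𝔪)⁻¹` on `B[ψ]`, while `(dim 𝔨 - dim 𝔪)⁻¹ (π_𝔨 - π_𝔪) ∈ D(𝔪)` exceeds
this bound. If `𝔨` is deleted, unit vectors `v ∈ 𝔨 ⊖ 𝔨⁻` and `w ∈ 𝔨⁺ ⊖ 𝔨`, for the neighbours
`𝔨⁻ < 𝔨 < 𝔨⁺` of `𝔨` in `φ ∪ {0}`, satisfy `⟪B v, v⟫ = ⟪B w, w⟫` on `B[ψ]` but not for `B = A^𝔨`.
Finally, a chain of moves from `φ` to `ψ ≠ φ` ends with a move onto `ψ`, which is strict when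
`max ψ ≠ 𝔤`. -/

section ChainOrder

variable {α : Type*}

theorem IsChain.supClosed [SemilatticeSup α] {s : Set α} (hs : IsChain (· ≤ ·) s) :
    SupClosed s := by
  intro a ha b hb
  rcases hs.total ha hb with hab | hba
  · rwa [sup_eq_right.2 hab]
  · rwa [sup_eq_left.2 hba]

theorem IsChain.infClosed [SemilatticeInf α] {s : Set α} (hs : IsChain (· ≤ ·) s) :
    InfClosed s := by
  intro a ha b hb
  rcases hs.total ha hb with hab | hba
  · rwa [inf_eq_left.2 hab]
  · rwa [inf_eq_right.2 hba]

variable [CompleteLattice α] {s : Set α}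

theorem IsChain.exists_lt_forall_le_of_lt (hs : IsChain (· ≤ ·) s) (hfin : s.Finite) {b : α}
    (hb : ⊥ < b) : ∃ m < b, ∀ k ∈ s, k < b → k ≤ m := by
  set t := {k ∈ s | k < b}
  have ht : SupClosed (insert ⊥ t) :=
    ((hs.mono (sep_subset _ _)).insert fun _ _ _ => Or.inl bot_le).supClosed
  refine ⟨sSup t, ?_, fun k hk hkb => le_sSup ⟨hk, hkb⟩⟩
  rcases ht.sSup_mem (hfin.subset (sep_subset _ _)) (mem_insert _ _) (subset_insert _ _)
    with h | h
  · exact h ▸ hb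
  · exact h.2

theorem IsChain.exists_gt_forall_ge_of_lt (hs : IsChain (· ≤ ·) s) (hfin : s.Finite) {a c : α}
    (hc : c ∈ s) (hac : a < c) : ∃ m, a < m ∧ ∀ k ∈ s, a < k → m ≤ k := by
  set t := {k ∈ s | a < k}
  refine ⟨sInf t, ?_, fun k hk hak => sInf_le ⟨hk, hak⟩⟩
  exact ((hs.mono (sep_subset _ _)).infClosed.sInf_mem_of_nonempty
    (hfin.subset (sep_subset _ _)) ⟨c, hc, hac⟩ subset_rfl).2

end ChainOrder

section Projection

variable {E : Type*} [NormedAddCommGroup E] [InnerProductSpace ℝ E]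

theorem trace_starProjection [FiniteDimensional ℝ E] (K : Submodule ℝ E) :
    LinearMap.trace ℝ E (K.starProjection : E →ₗ[ℝ] E) = finrank ℝ K :=
  LinearMap.IsProj.trace
    ⟨K.starProjection_apply_mem, fun _ hx => Submodule.starProjection_eq_self_iff.2 hx⟩

theorem inner_starProjection_sub_starProjection_self_nonneg [CompleteSpace E]
    {M K : Submodule ℝ E} [M.HasOrthogonalProjection] [K.HasOrthogonalProjection] (h : M ≤ K)
    (x : E) : 0 ≤ ⟪(K.starProjection - M.starProjection) x, x⟫ :=
  (ContinuousLinearMap.IsPositive.of_isStarProjection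
    (isStarProjection_starProjection.sub_of_mul_eq_left isStarProjection_starProjection
      (Submodule.starProjection_comp_starProjection_of_le h))).inner_nonneg_left x

theorem exists_mem_orthogonal_inner_self_eq_one {M K : Submodule ℝ E}
    [M.HasOrthogonalProjection] (h : M < K) : ∃ v ∈ K, v ∈ Mᗮ ∧ ⟪v, v⟫ = 1 := by
  obtain ⟨x, hxK, hxM⟩ := SetLike.exists_of_lt h
  set u := x - M.starProjection x
  have hu : u ≠ 0 := fun hu =>
    hxM (Submodule.starProjection_eq_self_iff.1 (sub_eq_zero.1 hu).symm)
  refine ⟨‖u‖⁻¹ • u, K.smul_mem _ (K.sub_mem hxK (h.le (M.starProjection_apply_mem x))),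
    Mᗮ.smul_mem _ (M.sub_starProjection_mem_orthogonal x), ?_⟩
  rw [real_inner_smul_left, real_inner_smul_right, real_inner_self_eq_norm_sq]
  field_simp [norm_ne_zero_iff.2 hu]

theorem convex_setOf_inner_apply_le (v : E) (c : ℝ) :
    Convex ℝ {B : E →L[ℝ] E | ⟪B v, v⟫ ≤ c} :=
  convex_halfSpace_le ⟨fun B C => by simp [inner_add_left],
    fun a B => by simp [real_inner_smul_left]⟩ c

theorem convex_setOf_inner_apply_eq (v w : E) :
    Convex ℝ {B : E →L[ℝ] E | ⟪B v, v⟫ = ⟪B w, w⟫} := by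
  simpa only [sub_eq_zero] using convex_hyperplane (f := fun B : E →L[ℝ] E => ⟪B v, v⟫ - ⟪B w, w⟫)
    ⟨fun B C => by simp only [add_apply, inner_add_left]; ring,
      fun a B => by simp only [smul_apply, real_inner_smul_left]; ring⟩ 0

end Projection

section

omit [FiniteDimensional ℝ L]

namespace CompactLieBracket

theorem br_mem_orthogonal {K : Submodule ℝ L} (hK : IsLieSub 𝔩 K) {X q : L} (hX : X ∈ K)
    (hq : q ∈ Kᗮ) : 𝔩.br X q ∈ Kᗮ := by
  rw [Submodule.mem_orthogonal]
  intro z hz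
  rw [real_inner_comm, 𝔩.skew, ← LinearMap.IsAlt.neg 𝔩.br_self, inner_neg_right, ← 𝔩.skew,
    Submodule.inner_right_of_mem_orthogonal (hK X hX z hz) hq, neg_zero]

theorem starProjection_br {K : Submodule ℝ L} [K.HasOrthogonalProjection] (hK : IsLieSub 𝔩 K)
    {X : L} (hX : X ∈ K) (y : L) : K.starProjection (𝔩.br X y) = 𝔩.br X (K.starProjection y) := by
  conv_lhs => rw [← add_sub_cancel (K.starProjection y) y, map_add, map_add]
  rw [Submodule.starProjection_eq_self_iff.2 (hK X hX _ (K.starProjection_apply_mem y)),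
    K.starProjection_apply_eq_zero_iff.2
      (𝔩.br_mem_orthogonal hK hX (K.sub_starProjection_mem_orthogonal y)), add_zero]

end CompactLieBracket

variable {𝔩 H}

theorem disk_top : disk 𝔩 H ⊤ = ∅ := if_pos rfl

theorem disk_antitone : Antitone (disk 𝔩 H) := by
  intro K' K h A hA
  by_cases hK : K = ⊤
  · rw [hK, disk_top] at hA
    exact hA.elim
  rw [disk, if_neg hK] at hA
  rw [disk, if_neg (ne_top_of_le_ne_top hK h)]
  obtain ⟨h1, h2, h3, h4, h5, h6⟩ := hA
  exact ⟨h1, h2, h3, fun x hx => h4 x (h hx), h5, fun X hX => h6 X (h hX)⟩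

theorem convex_disk (K : Submodule ℝ L) : Convex ℝ (disk 𝔩 H K) := by
  unfold disk
  split_ifs
  · exact convex_empty
  rintro A ⟨a1, a2, a3, a4, a5, a6⟩ B ⟨b1, b2, b3, b4, b5, b6⟩ a b ha hb hab
  refine ⟨fun x y => ?_, fun Z hZ y => ?_, fun x => ?_, fun x hx => ?_, ?_, fun X hX y => ?_⟩
  · simp [inner_add_left, inner_add_right, real_inner_smul_left, real_inner_smul_right, a1, b1]
  · simp [a2 Z hZ, b2 Z hZ]
  · simp only [add_apply, smul_apply, inner_add_left, real_inner_smul_left]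
    exact add_nonneg (mul_nonneg ha (a3 x)) (mul_nonneg hb (b3 x))
  · simp [a4 x hx, b4 x hx]
  · simp [a5, b5, hab]
  · simp [a6 X hX, b6 X hX]

theorem disk_apply_eq_zero {K : Submodule ℝ L} {A : L →L[ℝ] L} (hA : A ∈ disk 𝔩 H K) {x : L}
    (hx : x ∈ K) : A x = 0 := by
  by_cases hK : K = ⊤
  · rw [hK, disk_top] at hA
    exact hA.elim
  rw [disk, if_neg hK] at hA
  exact hA.2.2.2.1 x hx

theorem isLieSub_top : IsLieSub 𝔩 ⊤ := fun _ _ _ _ => trivial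

theorem join_empty (X : Set (L →L[ℝ] L)) : join X ∅ = X := if_pos rfl

theorem join_eq_convexJoin {X Y : Set (L →L[ℝ] L)} (hY : Y.Nonempty) :
    join X Y = convexJoin ℝ X Y := by
  ext z
  simp only [_root_.join, if_neg hY.ne_empty, mem_ofPred_eq, mem_convexJoin, segment_eq_image,
    mem_image]
  grind

theorem Convex.join {X Y : Set (L →L[ℝ] L)} (hX : Convex ℝ X) (hY : Convex ℝ Y) :
    Convex ℝ (join X Y) := by
  rcases Y.eq_empty_or_nonempty with rfl | hY'
  · rwa [join_empty]
  · rw [join_eq_convexJoin hY']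
    exact hX.convexJoin hY

theorem join_subset {X Y C : Set (L →L[ℝ] L)} (hC : Convex ℝ C) (hX : X ⊆ C) (hY : Y ⊆ C) :
    join X Y ⊆ C := by
  rcases Y.eq_empty_or_nonempty with rfl | hY'
  · rwa [join_empty]
  · rw [join_eq_convexJoin hY']
    exact convexJoin_subset hX hY hC

theorem subset_join_left (X Y : Set (L →L[ℝ] L)) : X ⊆ join X Y := by
  rcases Y.eq_empty_or_nonempty with rfl | hY
  · rw [join_empty]
  · rw [join_eq_convexJoin hY]
    exact subset_convexJoin_left hY

theorem subset_join_right {X : Set (L →L[ℝ] L)} (hX : X.Nonempty) (Y : Set (L →L[ℝ] L)) :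
    Y ⊆ join X Y := by
  rcases Y.eq_empty_or_nonempty with rfl | hY
  · exact empty_subset _
  · rw [join_eq_convexJoin hY]
    exact subset_convexJoin_right hX

theorem IsFlag.flagMax_mem {s : Finset (Submodule ℝ L)} (hs : IsFlag 𝔩 H s) : flagMax s ∈ s :=
  hs.2.1.supClosed.sSup_mem_of_nonempty s.finite_toSet (by exact_mod_cast hs.1) subset_rfl

theorem le_flagMax {s : Finset (Submodule ℝ L)} {k : Submodule ℝ L} (hk : k ∈ s) :
    k ≤ flagMax s :=
  le_sSup hk

theorem flagMax_singleton (K : Submodule ℝ L) : flagMax {K} = K := by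
  simp [flagMax]

theorem flagMax_insert {s : Finset (Submodule ℝ L)} {K : Submodule ℝ L} (hK : flagMax s ≤ K) :
    flagMax (insert K s) = K := by
  rw [flagMax, Finset.coe_insert, sSup_insert]
  exact sup_eq_left.2 hK

theorem IsFlag.flagMax_erase {s : Finset (Submodule ℝ L)} (hs : IsFlag 𝔩 H s)
    {K : Submodule ℝ L} (hK : K ≠ flagMax s) : flagMax (s.erase K) = flagMax s :=
  le_antisymm (sSup_le_sSup (Finset.coe_subset.2 (s.erase_subset K)))
    (le_sSup (Finset.mem_erase.2 ⟨hK.symm, hs.flagMax_mem⟩))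

end

section

variable {𝔩 H}

theorem projL_eq_starProjection (K : Submodule ℝ L) : projL K = K.starProjection := rfl

theorem smul_starProjection_sub_mem_disk {M K : Submodule ℝ L} (hM : IsLieSub 𝔩 M)
    (hK : IsLieSub 𝔩 K) (hHM : H ≤ M) (hMK : M < K) :
    ((finrank ℝ K : ℝ) - finrank ℝ M)⁻¹ • (K.starProjection - M.starProjection) ∈
      disk 𝔩 H M := by
  have hpos : (0 : ℝ) < finrank ℝ K - finrank ℝ M :=
    sub_pos.2 (Nat.cast_lt.2 (Submodule.finrank_lt_finrank_of_lt hMK))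
  have hcomm : ∀ X ∈ M, ∀ y, (K.starProjection - M.starProjection) (𝔩.br X y) =
      𝔩.br X ((K.starProjection - M.starProjection) y) := fun X hX y => by
    simp only [sub_apply, map_sub, 𝔩.starProjection_br hK (hMK.le hX), 𝔩.starProjection_br hM hX]
  rw [disk, if_neg hMK.ne_top]
  refine ⟨fun x y => ?_, fun Z hZ y => ?_, fun x => ?_, fun x hx => ?_, ?_, fun X hX y => ?_⟩
  · simp [real_inner_smul_left, real_inner_smul_right, inner_sub_left, inner_sub_right,
      Submodule.inner_starProjection_left_eq_right]
  · simp [hcomm Z (hHM hZ) y]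
  · rw [smul_apply, real_inner_smul_left]
    exact mul_nonneg (inv_nonneg.2 hpos.le)
      (inner_starProjection_sub_starProjection_self_nonneg hMK.le x)
  · simp [Submodule.starProjection_eq_self_iff.2 hx,
      Submodule.starProjection_eq_self_iff.2 (hMK.le hx)]
  · rw [ContinuousLinearMap.toLinearMap_smul, ContinuousLinearMap.toLinearMap_sub, map_smul,
      map_sub, trace_starProjection, trace_starProjection, smul_eq_mul, inv_mul_cancel₀ hpos.ne']
  · simp [hcomm X hX y]

theorem Apt_mem_disk {K : Submodule ℝ L} (hK : IsLieSub 𝔩 K) (hHK : H ≤ K) (hKtop : K ≠ ⊤) :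
    Apt K ∈ disk 𝔩 H K := by
  have := smul_starProjection_sub_mem_disk hK isLieSub_top hHK hKtop.lt_top
  rwa [Submodule.starProjection_top, finrank_top] at this

theorem Apt_apply_of_mem {K : Submodule ℝ L} {x : L} (hx : x ∈ K) : Apt K x = 0 := by
  simp [Apt, projL_eq_starProjection, Submodule.starProjection_eq_self_iff.2 hx]

theorem Apt_apply_of_mem_orthogonal {K : Submodule ℝ L} {x : L} (hx : x ∈ Kᗮ) :
    Apt K x = ((finrank ℝ L : ℝ) - finrank ℝ K)⁻¹ • x := by
  simp [Apt, projL_eq_starProjection, K.starProjection_apply_eq_zero_iff.2 hx]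

theorem butterfly_subset_of_convex {s : Finset (Submodule ℝ L)} {C : Set (L →L[ℝ] L)}
    (hC : Convex ℝ C) (hApt : ∀ k ∈ s, k ≠ flagMax s → Apt k ∈ C)
    (hdisk : disk 𝔩 H (flagMax s) ⊆ C) : butterfly 𝔩 H s ⊆ C := by
  unfold butterfly
  split_ifs
  · exact hdisk
  refine join_subset hC (convexHull_min ?_ hC) hdisk
  rintro _ ⟨k, hk, rfl⟩
  obtain ⟨hkM, hks⟩ := Finset.mem_erase.1 hk
  exact hApt k hks hkM

theorem convex_butterfly (s : Finset (Submodule ℝ L)) : Convex ℝ (butterfly 𝔩 H s) := by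
  unfold butterfly
  split_ifs
  · exact convex_disk _
  · exact (convex_convexHull ℝ _).join (convex_disk _)

theorem Apt_mem_butterfly_of_ne_flagMax {s : Finset (Submodule ℝ L)} {k : Submodule ℝ L}
    (hk : k ∈ s) (hkM : k ≠ flagMax s) : Apt k ∈ butterfly 𝔩 H s := by
  have hcard : s.card ≠ 1 := by
    intro hcard
    obtain ⟨a, rfl⟩ := Finset.card_eq_one.1 hcard
    rw [Finset.mem_singleton.1 hk, flagMax_singleton] at hkM
    exact hkM rfl
  rw [butterfly, if_neg hcard]
  exact subset_join_left _ _
    (subset_convexHull ℝ _ (mem_image_of_mem _ (Finset.mem_erase.2 ⟨hkM, hk⟩)))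

theorem IsFlag.disk_flagMax_subset_butterfly {s : Finset (Submodule ℝ L)} (hs : IsFlag 𝔩 H s) :
    disk 𝔩 H (flagMax s) ⊆ butterfly 𝔩 H s := by
  unfold butterfly
  split_ifs with hcard
  · exact subset_rfl
  have hcard' : 1 < s.card := by
    have := hs.1.card_pos
    omega
  obtain ⟨k, hk, hkM⟩ := Finset.exists_mem_ne hcard' (flagMax s)
  exact subset_join_right
    ⟨Apt k, subset_convexHull ℝ _ (mem_image_of_mem _ (Finset.mem_erase.2 ⟨hkM, hk⟩))⟩ _

theorem IsFlag.Apt_mem_butterfly {s : Finset (Submodule ℝ L)} (hs : IsFlag 𝔩 H s)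
    (hMtop : flagMax s ≠ ⊤) {k : Submodule ℝ L} (hk : k ∈ s) : Apt k ∈ butterfly 𝔩 H s := by
  rcases eq_or_ne k (flagMax s) with rfl | hkM
  · exact hs.disk_flagMax_subset_butterfly
      (Apt_mem_disk (hs.2.2 _ hk).1 (hs.2.2 _ hk).2.le hMtop)
  · exact Apt_mem_butterfly_of_ne_flagMax hk hkM

theorem IsFlag.butterfly_insert_subset {s : Finset (Submodule ℝ L)} (hs : IsFlag 𝔩 H s)
    {K : Submodule ℝ L} (hK : flagMax s < K) :
    butterfly 𝔩 H (insert K s) ⊆ butterfly 𝔩 H s := by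
  refine butterfly_subset_of_convex (convex_butterfly s) (fun k hk hkK => ?_) ?_
  · rw [flagMax_insert hK.le] at hkK
    exact hs.Apt_mem_butterfly hK.ne_top (Finset.mem_of_mem_insert_of_ne hk hkK)
  · rw [flagMax_insert hK.le]
    exact (disk_antitone hK.le).trans hs.disk_flagMax_subset_butterfly

theorem IsFlag.butterfly_erase_subset {s : Finset (Submodule ℝ L)} (hs : IsFlag 𝔩 H s)
    {K : Submodule ℝ L} (hKM : K ≠ flagMax s) : butterfly 𝔩 H (s.erase K) ⊆ butterfly 𝔩 H s := by
  refine butterfly_subset_of_convex (convex_butterfly s) (fun k hk hkM => ?_) ?_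
  · rw [hs.flagMax_erase hKM] at hkM
    exact Apt_mem_butterfly_of_ne_flagMax (Finset.mem_of_mem_erase hk) hkM
  · rw [hs.flagMax_erase hKM]
    exact hs.disk_flagMax_subset_butterfly

theorem FlagStep.butterfly_subset {s t : Finset (Submodule ℝ L)} (h : FlagStep 𝔩 H s t) :
    butterfly 𝔩 H t ⊆ butterfly 𝔩 H s := by
  obtain ⟨hs, -, ⟨K, hK, rfl⟩ | ⟨K, -, hKM, rfl⟩⟩ := h
  · exact hs.butterfly_insert_subset hK
  · exact hs.butterfly_erase_subset hKM

theorem FlagLE.butterfly_subset {s t : Finset (Submodule ℝ L)} (h : FlagLE 𝔩 H s t) :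
    butterfly 𝔩 H t ⊆ butterfly 𝔩 H s := by
  induction h with
  | refl => exact subset_rfl
  | tail _ hstep ih => exact hstep.butterfly_subset.trans ih

theorem IsFlag.butterfly_insert_ssubset {s : Finset (Submodule ℝ L)} (hs : IsFlag 𝔩 H s)
    {K : Submodule ℝ L} (hK : flagMax s < K) (hKlie : IsLieSub 𝔩 K) (hKtop : K ≠ ⊤) :
    butterfly 𝔩 H (insert K s) ⊂ butterfly 𝔩 H s := by
  set M := flagMax s
  obtain ⟨hMlie, hHM⟩ := hs.2.2 M hs.flagMax_mem
  obtain ⟨v, hvK, hvM, hvv⟩ := exists_mem_orthogonal_inner_self_eq_one hK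
  have hMK : (finrank ℝ M : ℝ) < finrank ℝ K :=
    Nat.cast_lt.2 (Submodule.finrank_lt_finrank_of_lt hK)
  have hKL : (finrank ℝ K : ℝ) < finrank ℝ L := Nat.cast_lt.2 (Submodule.finrank_lt hKtop)
  have hbound : butterfly 𝔩 H (insert K s) ⊆
      {B | ⟪B v, v⟫ ≤ ((finrank ℝ L : ℝ) - finrank ℝ M)⁻¹} := by
    refine butterfly_subset_of_convex (convex_setOf_inner_apply_le v _)
      (fun k hk hkK => ?_) ?_
    · rw [flagMax_insert hK.le] at hkK
      have hkM : k ≤ M := le_flagMax (Finset.mem_of_mem_insert_of_ne hk hkK)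
      have hkM' : (finrank ℝ k : ℝ) ≤ finrank ℝ M := Nat.cast_le.2 (Submodule.finrank_mono hkM)
      rw [mem_ofPred_eq, Apt_apply_of_mem_orthogonal (Submodule.orthogonal_le hkM hvM),
        real_inner_smul_left, hvv, mul_one]
      exact inv_anti₀ (by linarith) (by linarith)
    · rw [flagMax_insert hK.le]
      intro B hB
      rw [mem_ofPred_eq, disk_apply_eq_zero hB hvK, inner_zero_left]
      exact inv_nonneg.2 (by linarith)
  refine (hs.butterfly_insert_subset hK).ssubset_of_not_subset fun hsub => ?_
  have hW := hbound (hsub (hs.disk_flagMax_subset_butterfly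
    (smul_starProjection_sub_mem_disk hMlie hKlie hHM.le hK)))
  rw [mem_ofPred_eq, smul_apply, sub_apply, Submodule.starProjection_eq_self_iff.2 hvK,
    M.starProjection_apply_eq_zero_iff.2 hvM, sub_zero, real_inner_smul_left, hvv,
    mul_one] at hW
  exact (inv_strictAnti₀ (by linarith) (by linarith)).not_ge hW

theorem IsFlag.butterfly_erase_ssubset {s : Finset (Submodule ℝ L)} (hs : IsFlag 𝔩 H s)
    {K : Submodule ℝ L} (hK : K ∈ s) (hKM : K ≠ flagMax s) :
    butterfly 𝔩 H (s.erase K) ⊂ butterfly 𝔩 H s := by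
  have hchain : IsChain (· ≤ ·) (s : Set (Submodule ℝ L)) := hs.2.1
  have hKM' : K < flagMax s := (le_flagMax hK).lt_of_ne hKM
  obtain ⟨Km, hKmK, hbelow⟩ :=
    hchain.exists_lt_forall_le_of_lt s.finite_toSet (bot_le.trans_lt (hs.2.2 K hK).2)
  obtain ⟨Kp, hKKp, habove⟩ :=
    hchain.exists_gt_forall_ge_of_lt s.finite_toSet hs.flagMax_mem hKM'
  obtain ⟨v, hvK, hvKm, hvv⟩ := exists_mem_orthogonal_inner_self_eq_one hKmK
  obtain ⟨w, hwKp, hwK, hww⟩ := exists_mem_orthogonal_inner_self_eq_one hKKp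
  have hsep : butterfly 𝔩 H (s.erase K) ⊆ {B | ⟪B v, v⟫ = ⟪B w, w⟫} := by
    refine butterfly_subset_of_convex (convex_setOf_inner_apply_eq v w) (fun k hk _ => ?_) ?_
    · obtain ⟨hkK, hks⟩ := Finset.mem_erase.1 hk
      rcases hchain.total hks hK with hk | hk
      · have hkKm := hbelow k hks (hk.lt_of_ne hkK)
        rw [mem_ofPred_eq, Apt_apply_of_mem_orthogonal (Submodule.orthogonal_le hkKm hvKm),
          Apt_apply_of_mem_orthogonal (Submodule.orthogonal_le hk hwK), real_inner_smul_left,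
          real_inner_smul_left, hvv, hww]
      · rw [mem_ofPred_eq, Apt_apply_of_mem (hk hvK),
          Apt_apply_of_mem (habove k hks (hk.lt_of_ne' hkK) hwKp), inner_zero_left,
          inner_zero_left]
    · rw [hs.flagMax_erase hKM]
      intro B hB
      rw [mem_ofPred_eq, disk_apply_eq_zero hB (hKM'.le hvK),
        disk_apply_eq_zero hB (habove _ hs.flagMax_mem hKM' hwKp), inner_zero_left,
        inner_zero_left]
  refine (hs.butterfly_erase_subset hKM).ssubset_of_not_subset fun hsub => ?_
  have hApt := hsep (hsub (Apt_mem_butterfly_of_ne_flagMax hK hKM))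
  rw [mem_ofPred_eq, Apt_apply_of_mem hvK, Apt_apply_of_mem_orthogonal hwK, inner_zero_left,
    real_inner_smul_left, hww, mul_one] at hApt
  exact (inv_pos.2 (sub_pos.2 (Nat.cast_lt.2 (Submodule.finrank_lt hKM'.ne_top)))).ne hApt

theorem FlagStep.butterfly_ssubset {s t : Finset (Submodule ℝ L)} (h : FlagStep 𝔩 H s t)
    (htop : flagMax t ≠ ⊤) : butterfly 𝔩 H t ⊂ butterfly 𝔩 H s := by
  obtain ⟨hs, ht, ⟨K, hK, rfl⟩ | ⟨K, hKs, hKM, rfl⟩⟩ := h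
  · rw [flagMax_insert hK.le] at htop
    exact hs.butterfly_insert_ssubset hK (ht.2.2 K (Finset.mem_insert_self K s)).1 htop
  · exact hs.butterfly_erase_ssubset hKs hKM

end

theorem butterfly_subset_of_lt
    (s t : Finset (Submodule ℝ L))
    (hle : FlagLE 𝔩 H s t) (hne : s ≠ t) :
    butterfly 𝔩 H t ⊆ butterfly 𝔩 H s ∧
      (flagMax t ≠ ⊤ → butterfly 𝔩 H t ⊂ butterfly 𝔩 H s) := by
  refine ⟨hle.butterfly_subset, fun htop => ?_⟩
  obtain ⟨u, hsu, hut⟩ := (Relation.ReflTransGen.cases_tail hle).resolve_left hne.symm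
  exact (hut.butterfly_ssubset htop).trans_subset (FlagLE.butterfly_subset hsu)
end
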